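/- Every Morse tile T splits uniquely as a join σ * θ̊ * τ̇, where σ is a closed simplex, θ̊ an open simplex, and τ̇ a closed simplex of non-vanishing dimension deprived of its empty face, each factor being possibly empty. Conversely, every such join σ * θ̊ * τ̇ is a Morse tile of order dim(θ) + 1 (order 0 if θ is empty), which is critical different from a closed simplex if and only if σ is empty, and basic if and only if τ is empty; moreover, in this decomposition θ̊ is the restriction set of T and, when τ is nonempty, σ * θ̊ is the Morse face of T. -/
import Mathlib


/-!
Common combinatorial framework for Morse shellings of simplicial complexes,
following J.-Y. Welschinger, "Morse shellings out of discrete Morse functions".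
-/

namespace MorseShelling

variable {V : Type*} [DecidableEq V] {W : Type*} [DecidableEq W]

/-- A (finite, combinatorial) simplicial complex: a downward-closed collection of
finite subsets (simplices) of the vertex type. -/
def IsComplex (K : Finset (Finset V)) : Prop :=
  ∀ σ ∈ K, ∀ τ ⊆ σ, τ ∈ K

/-- A relative simplicial complex `S = K \ L`, recorded as the pair `(K, L)`. -/
structure RelCplx (V : Type*) where
  K : Finset (Finset V)
  L : Finset (Finset V)

/-- The faces of a relative simplicial complex. -/
def RelCplx.faces (S : RelCplx V) : Finset (Finset V) := S.K \ S.L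

/-- Validity of a relative simplicial complex: both members are complexes and
`L` is a subcomplex of `K`. -/
def RelCplx.IsValid (S : RelCplx V) : Prop :=
  IsComplex S.K ∧ IsComplex S.L ∧ S.L ⊆ S.K

/-- Join of two collections of faces (on disjoint vertex supports). -/
def joinF (K₁ K₂ : Finset (Finset V)) : Finset (Finset V) :=
  (K₁ ×ˢ K₂).image fun p => p.1 ∪ p.2

/-- Join of two relative simplicial complexes:
`(K₁ * K₂) \ ((L₁ * K₂) ∪ (K₁ * L₂))`. -/
def RelCplx.join (S₁ S₂ : RelCplx V) : RelCplx V :=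
  ⟨joinF S₁.K S₂.K, joinF S₁.L S₂.K ∪ joinF S₁.K S₂.L⟩

/-- The star of a simplex `σ` in `K` : all faces `τ` with `σ ∪ τ ∈ K`. -/
def star (K : Finset (Finset V)) (σ : Finset V) : Finset (Finset V) :=
  K.filter fun τ => σ ∪ τ ∈ K

/-- The link of a simplex `σ` in `K` : all faces `τ` of the star disjoint from `σ`. -/
def link (K : Finset (Finset V)) (σ : Finset V) : Finset (Finset V) :=
  K.filter fun τ => σ ∪ τ ∈ K ∧ σ ∩ τ = ∅

/-- The star of a simplex in a relative complex, `st_S(σ) = st_K(σ) \ st_L(σ)`. -/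
def RelCplx.starR (S : RelCplx V) (σ : Finset V) : RelCplx V :=
  ⟨star S.K σ, star S.L σ⟩

/-- The link of a simplex in a relative complex, `lk_S(σ) = lk_K(σ) \ lk_L(σ)`. -/
def RelCplx.linkR (S : RelCplx V) (σ : Finset V) : RelCplx V :=
  ⟨link S.K σ, link S.L σ⟩

/-- The boundary complex of a simplex: all its proper faces (including `∅`). -/
def boundary (σ : Finset V) : Finset (Finset V) := σ.powerset.erase σ

/-- First barycentric subdivision: the faces are the (possibly empty) flags
`∅ ≠ σ₀ ⊊ σ₁ ⊊ ... ⊊ σ_q` of nonempty faces of `K`, a nonempty face `σ` of `K`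
becoming the vertex `σ̂ = σ`. By convention `sd ∅ = ∅`. -/
def sd (K : Finset (Finset V)) : Finset (Finset (Finset V)) :=
  if K = ∅ then ∅ else
    (K.erase ∅).powerset.filter fun c => ∀ a ∈ c, ∀ b ∈ c, a ⊆ b ∨ b ⊆ a

/-- First barycentric subdivision of a relative complex: `sd (K \ L) = sd K \ sd L`. -/
def RelCplx.sdR (S : RelCplx V) : RelCplx (Finset V) := ⟨sd S.K, sd S.L⟩

/-- An (absolute) simplicial complex seen as a relative one. -/
def toRel (K : Finset (Finset V)) : RelCplx V := ⟨K, ∅⟩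

/-- The vertex support of a relative complex. -/
def suppK (S : RelCplx V) : Finset V := S.K.sup id

/-- The ridges (codimension one faces) of a simplex. -/
def ridges (σ : Finset V) : Finset (Finset V) := σ.image fun v => σ.erase v

/-- The subcomplex of the simplex `σ` consisting of the faces contained in some
member of `R`. -/
def below (σ : Finset V) (R : Finset (Finset V)) : Finset (Finset V) :=
  σ.powerset.filter fun τ => ∃ ρ ∈ R, τ ⊆ ρ

/-- The restriction set of the basic tile `σ \ R`: the face spanned by the
vertices opposite to the missing ridges `R`. -/
def restSet (σ : Finset V) (R : Finset (Finset V)) : Finset V :=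
  σ.filter fun v => σ.erase v ∈ R

/-- A basic tile of dimension `n` and order `k`: an `n`-simplex deprived of `k`
of its ridges (together with all the faces contained in them). -/
def IsBasicTile (S : RelCplx V) (n k : ℕ) : Prop :=
  ∃ σ : Finset V, σ.card = n + 1 ∧ S.K = σ.powerset ∧
    ∃ R ⊆ ridges σ, R.card = k ∧ S.L = below σ R

/-- A Morse tile of dimension `n` and order `k`: a basic tile, possibly further
deprived of a unique face of higher codimension (its Morse face). -/
def IsMorseTile (S : RelCplx V) (n k : ℕ) : Prop :=
  ∃ σ : Finset V, σ.card = n + 1 ∧ S.K = σ.powerset ∧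
    ∃ R ⊆ ridges σ, R.card = k ∧
      (S.L = below σ R ∨
        ∃ μ ⊆ σ, μ ∉ below σ R ∧ μ.card + 2 ≤ σ.card ∧
          S.L = below σ R ∪ below σ {μ})

/-- A critical tile of dimension `n` and index `k`: either a closed simplex
(index `0`), or a basic tile of order `k` deprived of its restriction set
(this includes the dotted simplex for `k = 0` and the open simplex for `k = n`). -/
def IsCriticalTile (S : RelCplx V) (n k : ℕ) : Prop :=
  ∃ σ : Finset V, σ.card = n + 1 ∧ S.K = σ.powerset ∧
    ((k = 0 ∧ S.L = ∅) ∨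
      (k ≤ n ∧ ∃ R ⊆ ridges σ, R.card = k ∧
        S.L = below σ R ∪ below σ {restSet σ R}))

/-- A closed simplex, as a tile. -/
def IsClosedSimplexTile (S : RelCplx V) : Prop :=
  ∃ σ : Finset V, S.K = σ.powerset ∧ S.L = ∅

/-- An open simplex, as a tile: deprived of its whole boundary, incl. the empty face. -/
def IsOpenSimplexTile (S : RelCplx V) : Prop :=
  ∃ σ : Finset V, σ ≠ ∅ ∧ S.K = σ.powerset ∧ S.L = σ.powerset.erase σ

/-- The closed simplex on vertex set `σ`, as a relative complex. -/
def closedT (σ : Finset V) : RelCplx V := ⟨σ.powerset, ∅⟩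

/-- The open simplex on vertex set `σ`. -/
def openT (σ : Finset V) : RelCplx V := ⟨σ.powerset, σ.powerset.erase σ⟩

/-- The closed simplex deprived of its empty face, `σ̇` (the neutral tile when
`σ = ∅`, so that empty factors may be dropped from joins). -/
def dotT (σ : Finset V) : RelCplx V := ⟨σ.powerset, if σ = ∅ then ∅ else {∅}⟩

/-- The Morse tile `σ * θ̊ * τ̇`. -/
def splitTile (σ θ τ : Finset V) : RelCplx V :=
  (closedT σ).join ((openT θ).join (dotT τ))

/-- A tiling of a relative simplicial complex by `N` relative facets: the tiles
are relative simplices whose underlying simplices are facets, and their faces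
partition the faces of `S`. -/
structure Tiling (S : RelCplx W) (N : ℕ) where
  tile : Fin N → RelCplx W
  isFacet : ∀ i, ∃ σ ∈ S.K, (∀ τ ∈ S.K, σ ⊆ τ → τ = σ) ∧ (tile i).K = σ.powerset
  subL : ∀ i, (tile i).L ⊆ (tile i).K
  disj : ∀ i j, i ≠ j → Disjoint (tile i).faces (tile j).faces
  cover : (Finset.univ : Finset (Fin N)).biUnion (fun i => (tile i).faces) = S.faces

/-- The union of the faces of the first `p` tiles of a tiling. -/
def Tiling.prefixFaces {S : RelCplx W} {N : ℕ} (T : Tiling S N) (p : ℕ) :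
    Finset (Finset W) :=
  (Finset.univ.filter fun i : Fin N => (i : ℕ) < p).biUnion fun i => (T.tile i).faces

/-- A tiling is a shelling when each of the sets of faces of `S_p = K_p \ L`
is a relative subcomplex, i.e. `L ∪ (tiles of index < p)` is a complex. -/
def Tiling.IsShelling {S : RelCplx W} {N : ℕ} (T : Tiling S N) : Prop :=
  ∀ p ≤ N, IsComplex (S.L ∪ T.prefixFaces p)

/-- A (shelled) tiling begins with a set `F` of faces when some initial segment
of its tiles partitions exactly `F`. -/
def Tiling.BeginsWith {S : RelCplx W} {N : ℕ} (T : Tiling S N)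
    (F : Finset (Finset W)) : Prop :=
  ∃ p ≤ N, T.prefixFaces p = F

/-- A Morse tiling: all tiles are Morse tiles. -/
def Tiling.IsMorse {S : RelCplx W} {N : ℕ} (T : Tiling S N) : Prop :=
  ∀ i, ∃ n k, IsMorseTile (T.tile i) n k

/-- An h-tiling: all tiles are basic or critical tiles. -/
def Tiling.IsH {S : RelCplx W} {N : ℕ} (T : Tiling S N) : Prop :=
  ∀ i, (∃ n k, IsBasicTile (T.tile i) n k) ∨ (∃ n k, IsCriticalTile (T.tile i) n k)

/-- `f` induces a simplicial isomorphism from `A` onto `B` (both viewed through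
their collections of faces). -/
def IsSimplicialIso (f : V → W) (A : Finset (Finset V)) (B : Finset (Finset W)) : Prop :=
  Set.BijOn (fun σ : Finset V => σ.image f) ↑A ↑B

/-- `f` induces an isomorphism of relative simplicial complexes. -/
def IsRelIso (f : V → W) (S : RelCplx V) (S' : RelCplx W) : Prop :=
  Set.BijOn (fun σ : Finset V => σ.image f) ↑S.K ↑S'.K ∧
    Set.BijOn (fun σ : Finset V => σ.image f) ↑S.L ↑S'.L

/-- The first derived neighborhood `N(L, K)` of a subcomplex `L` in `K` : the union
of the stars in `sd K` of the vertices of `L`. -/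
def derivedNbhd (L K : Finset (Finset V)) : Finset (Finset (Finset V)) :=
  (L.filter fun s => s.card = 1).biUnion fun s => star (sd K) {s}

/-- The faces of the derived neighborhood `N(T, S)` of a tile `T` in a relative
complex `S`: the union of the relative stars in `sd S` of the vertices of `T`. -/
def relDerivedNbhd (T S : RelCplx V) : Finset (Finset (Finset V)) :=
  ((suppK T).biUnion fun v => ((S.sdR).starR {({v} : Finset V)}).faces) ∩ (S.sdR).faces

/-- A discrete Morse function on the finite simplicial complex `K`. -/
def IsDiscreteMorse (K : Finset (Finset V)) (f : Finset V → ℝ) : Prop :=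
  ∀ σ ∈ K, σ ≠ ∅ →
    (K.filter fun τ => σ ⊂ τ ∧ f τ ≤ f σ).card ≤ 1 ∧
    (K.filter fun θ => θ ≠ ∅ ∧ θ ⊂ σ ∧ f σ ≤ f θ).card ≤ 1

/-- A critical face of a discrete Morse function. -/
def IsCriticalFace (K : Finset (Finset V)) (f : Finset V → ℝ) (σ : Finset V) : Prop :=
  σ ∈ K ∧ σ ≠ ∅ ∧ (∀ τ ∈ K, σ ⊂ τ → f σ < f τ) ∧
    ∀ θ ∈ K, θ ≠ ∅ → θ ⊂ σ → f θ < f σ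

/-- An elementary collapse: removal of a facet `τ` together with a ridge `θ` of it
contained in no other facet. -/
def ElementaryCollapse (K K' : Finset (Finset V)) : Prop :=
  ∃ τ ∈ K, ∃ θ ∈ K, θ ⊆ τ ∧ τ.card = θ.card + 1 ∧
    (∀ ρ ∈ K, τ ⊆ ρ → ρ = τ) ∧
    (∀ ρ ∈ K, θ ⊆ ρ → ρ = θ ∨ ρ = τ) ∧
    K' = (K.erase τ).erase θ

/-- A finite simplicial complex is collapsible when some finite sequence of
elementary collapses reduces it to a single vertex. -/
def Collapsible (K : Finset (Finset V)) : Prop :=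
  ∃ v : V, Relation.ReflTransGen ElementaryCollapse K {∅, {v}}
section Aux

variable {V : Type*} [DecidableEq V]

lemma RelCplx.ext' {S S' : RelCplx V} (h1 : S.K = S'.K) (h2 : S.L = S'.L) : S = S' := by
  cases S; cases S'; cases h1; cases h2; rfl

lemma powerset_inj {a b : Finset V} (h : a.powerset = b.powerset) : a = b := by
  have h1 := Finset.mem_powerset_self a
  have h2 := Finset.mem_powerset_self b
  rw [h] at h1; rw [← h] at h2
  exact Finset.Subset.antisymm (Finset.mem_powerset.1 h1) (Finset.mem_powerset.1 h2)

lemma ne_empty_of_two_le {τ : Finset V} (h : 2 ≤ τ.card) : τ ≠ ∅ := by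
  intro he; rw [he] at h; simp at h

lemma mem_joinF {A B : Finset (Finset V)} {ρ : Finset V} :
    ρ ∈ joinF A B ↔ ∃ a ∈ A, ∃ b ∈ B, a ∪ b = ρ := by
  constructor
  · intro h
    obtain ⟨p, hp, rfl⟩ := Finset.mem_image.1 h
    obtain ⟨h1, h2⟩ := Finset.mem_product.1 hp
    exact ⟨p.1, h1, p.2, h2, rfl⟩
  · rintro ⟨a, ha, b, hb, rfl⟩
    exact Finset.mem_image.2 ⟨(a, b), Finset.mem_product.2 ⟨ha, hb⟩, rfl⟩

lemma joinF_empty_left (B : Finset (Finset V)) : joinF ∅ B = ∅ := by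
  simp [joinF]

lemma joinF_empty_right (A : Finset (Finset V)) : joinF A ∅ = ∅ := by
  simp [joinF]

lemma joinF_singleton_empty (A : Finset (Finset V)) : joinF A {∅} = A := by
  ext ρ; simp [mem_joinF]

lemma joinF_union_right (A B C : Finset (Finset V)) :
    joinF A (B ∪ C) = joinF A B ∪ joinF A C := by
  ext ρ
  simp only [mem_joinF, Finset.mem_union]
  aesop

lemma joinF_powerset (a b : Finset V) :
    joinF a.powerset b.powerset = (a ∪ b).powerset := by
  ext ρ
  simp only [mem_joinF, Finset.mem_powerset]
  constructor
  · rintro ⟨x, hx, y, hy, rfl⟩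
    exact Finset.union_subset_union hx hy
  · intro h
    refine ⟨ρ ∩ a, Finset.inter_subset_right, ρ \ a, ?_, ?_⟩
    · intro v hv
      obtain ⟨h1, h2⟩ := Finset.mem_sdiff.1 hv
      rcases Finset.mem_union.1 (h h1) with h3 | h3
      · exact absurd h3 h2
      · exact h3
    · ext v
      simp only [Finset.mem_union, Finset.mem_inter, Finset.mem_sdiff]
      by_cases hva : v ∈ a <;> tauto

lemma joinF_pow_erase_pow {σ θ τ : Finset V} (h1 : Disjoint σ θ) (h2 : Disjoint θ τ) :
    joinF σ.powerset (joinF (θ.powerset.erase θ) τ.powerset) =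
      (σ ∪ θ ∪ τ).powerset.filter fun ρ => ¬ θ ⊆ ρ := by
  ext ρ
  simp only [mem_joinF, Finset.mem_powerset, Finset.mem_erase, Finset.mem_filter]
  constructor
  · rintro ⟨a, ha, bc, ⟨b, ⟨hbne, hb⟩, c, hc, rfl⟩, rfl⟩
    refine ⟨?_, ?_⟩
    · intro v hv
      simp only [Finset.mem_union] at hv ⊢
      rcases hv with h | h | h
      · exact Or.inl (Or.inl (ha h))
      · exact Or.inl (Or.inr (hb h))
      · exact Or.inr (hc h)
    · intro hcon
      refine hbne (Finset.Subset.antisymm hb fun v hv => ?_)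
      have hv2 := hcon hv
      simp only [Finset.mem_union] at hv2
      rcases hv2 with h | h | h
      · exact absurd hv (Finset.disjoint_left.1 h1 (ha h)).elim
      · exact h
      · exact absurd (hc h) (Finset.disjoint_left.1 h2 hv)
  · rintro ⟨hsub, hns⟩
    refine ⟨ρ ∩ σ, Finset.inter_subset_right,
      (ρ ∩ θ) ∪ (ρ \ (σ ∪ θ)),
      ⟨ρ ∩ θ, ⟨fun hcon => hns ?_, Finset.inter_subset_right⟩, ρ \ (σ ∪ θ), fun v hv => ?_, rfl⟩, ?_⟩
    · rw [← hcon]; exact Finset.inter_subset_left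
    · obtain ⟨hv1, hv2⟩ := Finset.mem_sdiff.1 hv
      rcases Finset.mem_union.1 (hsub hv1) with h | h
      · exact absurd h hv2
      · exact h
    · ext v
      simp only [Finset.mem_union, Finset.mem_inter, Finset.mem_sdiff]
      constructor
      · rintro (h | h | h) <;> exact h.1
      · intro hv
        by_cases hvσ : v ∈ σ
        · exact Or.inl ⟨hv, hvσ⟩
        by_cases hvθ : v ∈ θ
        · exact Or.inr (Or.inl ⟨hv, hvθ⟩)
        · exact Or.inr (Or.inr ⟨hv, by simp [Finset.mem_union, hvσ, hvθ]⟩)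

lemma joinF_pow_erase {σ θ : Finset V} (h : Disjoint σ θ) :
    joinF σ.powerset (θ.powerset.erase θ) = (σ ∪ θ).powerset.filter fun ρ => ¬ θ ⊆ ρ := by
  have h2 := joinF_pow_erase_pow (τ := (∅ : Finset V)) h (Finset.disjoint_empty_right θ)
  rwa [Finset.powerset_empty, joinF_singleton_empty, Finset.union_empty] at h2

lemma splitTile_K (σ θ τ : Finset V) : (splitTile σ θ τ).K = (σ ∪ θ ∪ τ).powerset := by
  show joinF σ.powerset (joinF θ.powerset τ.powerset) = _
  rw [joinF_powerset, joinF_powerset, Finset.union_assoc]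

lemma splitTile_L_of_empty {σ θ : Finset V} (h : Disjoint σ θ) :
    (splitTile σ θ ∅).L = (σ ∪ θ).powerset.filter fun ρ => ¬ θ ⊆ ρ := by
  show joinF ∅ _ ∪ joinF σ.powerset
      (joinF (θ.powerset.erase θ) (∅ : Finset V).powerset ∪
        joinF θ.powerset (if (∅ : Finset V) = ∅ then ∅ else {∅})) = _
  rw [if_pos rfl, joinF_empty_left, joinF_empty_right, Finset.powerset_empty,
    joinF_singleton_empty, Finset.union_empty, Finset.empty_union, joinF_pow_erase h]

lemma splitTile_L_of_ne {σ θ τ : Finset V} (h1 : Disjoint σ θ) (h2 : Disjoint θ τ)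
    (hτ : τ ≠ ∅) :
    (splitTile σ θ τ).L =
      ((σ ∪ θ ∪ τ).powerset.filter fun ρ => ¬ θ ⊆ ρ) ∪ (σ ∪ θ).powerset := by
  show joinF ∅ _ ∪ joinF σ.powerset
      (joinF (θ.powerset.erase θ) τ.powerset ∪
        joinF θ.powerset (if τ = ∅ then ∅ else {∅})) = _
  rw [if_neg hτ, joinF_empty_left, joinF_singleton_empty, Finset.empty_union,
    joinF_union_right, joinF_pow_erase_pow h1 h2, joinF_powerset]

end Aux
section Aux2
set_option linter.unusedSectionVars false

variable {V : Type*} [DecidableEq V]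

lemma below_image_erase {α s : Finset V} (h : α ⊆ s) :
    below s (α.image fun v => s.erase v) = s.powerset.filter fun ρ => ¬ α ⊆ ρ := by
  ext ρ
  simp only [below, Finset.mem_filter, Finset.mem_powerset, Finset.mem_image]
  constructor
  · rintro ⟨h1, ρ', ⟨v, hv, rfl⟩, h3⟩
    exact ⟨h1, fun hc => (Finset.notMem_erase v s) (h3 (hc hv))⟩
  · rintro ⟨h1, h2⟩
    obtain ⟨v, hv, hvρ⟩ := Finset.not_subset.1 h2
    exact ⟨h1, s.erase v, ⟨v, hv, rfl⟩, Finset.subset_erase.2 ⟨h1, hvρ⟩⟩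

lemma restSet_image {α s : Finset V} (h : α ⊆ s) :
    restSet s (α.image fun v => s.erase v) = α := by
  ext v
  simp only [restSet, Finset.mem_filter, Finset.mem_image]
  constructor
  · rintro ⟨hvs, w, hw, hew⟩
    by_cases hvw : v = w
    · exact hvw ▸ hw
    · exfalso
      have hm : v ∈ s.erase w := Finset.mem_erase.2 ⟨hvw, hvs⟩
      rw [hew] at hm
      exact Finset.notMem_erase v s hm
  · intro hv
    exact ⟨h hv, v, hv, rfl⟩

lemma card_image_erase {α s : Finset V} (h : α ⊆ s) :
    (α.image fun v => s.erase v).card = α.card :=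
  Finset.card_image_of_injOn fun a ha b hb hab => by
    by_contra hne
    have hm : a ∈ s.erase b := Finset.mem_erase.2 ⟨hne, h ha⟩
    rw [← hab] at hm
    exact Finset.notMem_erase a s hm

lemma image_erase_subset_ridges {α s : Finset V} (h : α ⊆ s) :
    (α.image fun v => s.erase v) ⊆ ridges s :=
  Finset.image_subset_image h

lemma eq_image_restSet {R : Finset (Finset V)} {s : Finset V} (h : R ⊆ ridges s) :
    R = (restSet s R).image fun v => s.erase v := by
  ext ρ
  simp only [Finset.mem_image, restSet, Finset.mem_filter]
  constructor
  · intro hρ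
    obtain ⟨v, hv, rfl⟩ := Finset.mem_image.1 (h hρ)
    exact ⟨v, ⟨hv, hρ⟩, rfl⟩
  · rintro ⟨v, ⟨hv, hR⟩, rfl⟩
    exact hR

lemma below_singleton {μ s : Finset V} (h : μ ⊆ s) : below s {μ} = μ.powerset := by
  ext ρ
  simp only [below, Finset.mem_filter, Finset.mem_powerset, Finset.mem_singleton,
    exists_eq_left]
  exact ⟨fun h2 => h2.2, fun h2 => ⟨h2.trans h, h2⟩⟩

lemma filter_rec_empty {θ s : Finset V} (hθ : θ ⊆ s) :
    (s.filter fun v => s.erase v ∈ s.powerset.filter fun ρ => ¬ θ ⊆ ρ) = θ := by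
  ext w
  simp only [Finset.mem_filter, Finset.mem_powerset]
  constructor
  · rintro ⟨hws, -, hns⟩
    by_contra hwθ
    exact hns fun u hu => Finset.mem_erase.2 ⟨fun he => hwθ (he ▸ hu), hθ hu⟩
  · intro hw
    exact ⟨hθ hw, Finset.erase_subset w s,
      fun hc => Finset.notMem_erase w s (hc hw)⟩

lemma filter_rec_ne {σ θ τ : Finset V} (d2 : Disjoint σ τ) (d3 : Disjoint θ τ)
    (hτ : 2 ≤ τ.card) :
    ((σ ∪ θ ∪ τ).filter fun v => (σ ∪ θ ∪ τ).erase v ∈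
      (((σ ∪ θ ∪ τ).powerset.filter fun ρ => ¬ θ ⊆ ρ) ∪ (σ ∪ θ).powerset)) = θ := by
  have hθs : θ ⊆ σ ∪ θ ∪ τ := fun v hv => by simp [Finset.mem_union, hv]
  ext w
  simp only [Finset.mem_filter, Finset.mem_union, Finset.mem_powerset]
  constructor
  · rintro ⟨hws, h | h⟩
    · by_contra hwθ
      exact h.2 fun u hu => Finset.mem_erase.2 ⟨fun he => hwθ (he ▸ hu), hθs hu⟩
    · exfalso
      obtain ⟨a, ha, b, hb, hab⟩ := Finset.one_lt_card.1 hτ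
      have key : ∀ u ∈ τ, u ≠ w → False := by
        intro u hu huw
        have hm : u ∈ (σ ∪ θ ∪ τ).erase w :=
          Finset.mem_erase.2 ⟨huw, by simp [Finset.mem_union, hu]⟩
        rcases Finset.mem_union.1 (h hm) with h' | h'
        · exact Finset.disjoint_left.1 d2 h' hu
        · exact Finset.disjoint_left.1 d3 h' hu
      by_cases haw : a = w
      · exact key b hb fun he => hab (by rw [haw, he])
      · exact key a ha haw
  · intro hw
    exact ⟨Or.inl (Or.inr hw), Or.inl ⟨Finset.erase_subset w _,
      fun hc => Finset.notMem_erase w _ (hc hw)⟩⟩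

lemma sdiff_union_rec {σ θ τ : Finset V} (d2 : Disjoint σ τ) (d3 : Disjoint θ τ) :
    (σ ∪ θ ∪ τ) \ (σ ∪ θ) = τ := by
  ext v
  rw [Finset.mem_sdiff]
  constructor
  · rintro ⟨h1, h2⟩
    rcases Finset.mem_union.1 h1 with h | h
    · exact absurd h h2
    · exact h
  · intro hv
    refine ⟨Finset.mem_union_right _ hv, fun hc => ?_⟩
    rcases Finset.mem_union.1 hc with h | h
    · exact Finset.disjoint_left.1 d2 h hv
    · exact Finset.disjoint_left.1 d3 h hv

end Aux2
section Aux3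
set_option linter.unusedSectionVars false

variable {V : Type*} [DecidableEq V]

lemma theta_rec {σ θ τ : Finset V} (d1 : Disjoint σ θ) (d2 : Disjoint σ τ)
    (d3 : Disjoint θ τ) (hτ : τ = ∅ ∨ 2 ≤ τ.card) :
    ((σ ∪ θ ∪ τ).filter fun v => (σ ∪ θ ∪ τ).erase v ∈ (splitTile σ θ τ).L) = θ := by
  rcases hτ with rfl | h2
  · rw [splitTile_L_of_empty d1]
    have h := filter_rec_empty (θ := θ) (s := σ ∪ θ) Finset.subset_union_right
    simpa [Finset.union_empty] using h
  · rw [splitTile_L_of_ne d1 d3 (ne_empty_of_two_le h2)]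
    exact filter_rec_ne d2 d3 h2

lemma theta_mem_L_iff {σ θ τ : Finset V} (d1 : Disjoint σ θ) (d3 : Disjoint θ τ)
    (hτ : τ = ∅ ∨ 2 ≤ τ.card) :
    (θ ∈ (splitTile σ θ τ).L ↔ τ ≠ ∅) := by
  rcases hτ with rfl | h2
  · rw [splitTile_L_of_empty d1]
    simp
  · have hne := ne_empty_of_two_le h2
    rw [splitTile_L_of_ne d1 d3 hne]
    simp only [Finset.mem_union, Finset.mem_powerset, Finset.mem_filter]
    exact ⟨fun _ => hne, fun _ => Or.inr Finset.subset_union_right⟩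

lemma sigma_rec {σ θ τ : Finset V} (d1 : Disjoint σ θ) (d2 : Disjoint σ τ)
    (d3 : Disjoint θ τ) (h2 : 2 ≤ τ.card) :
    ((σ ∪ θ ∪ τ).filter fun v => v ∉ θ ∧ insert v θ ∈ (splitTile σ θ τ).L) = σ := by
  rw [splitTile_L_of_ne d1 d3 (ne_empty_of_two_le h2)]
  ext v
  simp only [Finset.mem_filter, Finset.mem_union, Finset.mem_powerset]
  constructor
  · rintro ⟨hvs, hvθ, h | h⟩
    · exact absurd (Finset.subset_insert v θ) h.2
    · have hm := h (Finset.mem_insert_self v θ)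
      rcases Finset.mem_union.1 hm with h' | h'
      · exact h'
      · exact absurd h' hvθ
  · intro hv
    refine ⟨Or.inl (Or.inl hv), Finset.disjoint_left.1 d1 hv, Or.inr ?_⟩
    intro u hu
    rcases Finset.mem_insert.1 hu with rfl | h'
    · exact Finset.mem_union_left _ hv
    · exact Finset.mem_union_right _ h'

lemma splitTile_inj {σ θ τ σ' θ' τ' : Finset V}
    (d1 : Disjoint σ θ) (d2 : Disjoint σ τ) (d3 : Disjoint θ τ)
    (hτ : τ = ∅ ∨ 2 ≤ τ.card)
    (d1' : Disjoint σ' θ') (d2' : Disjoint σ' τ') (d3' : Disjoint θ' τ')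
    (hτ' : τ' = ∅ ∨ 2 ≤ τ'.card)
    (heq : splitTile σ θ τ = splitTile σ' θ' τ') :
    σ = σ' ∧ θ = θ' ∧ τ = τ' := by
  have hK := congrArg RelCplx.K heq
  rw [splitTile_K, splitTile_K] at hK
  have hs : σ ∪ θ ∪ τ = σ' ∪ θ' ∪ τ' := powerset_inj hK
  have hθ : θ = θ' := by
    have e1 := theta_rec d1 d2 d3 hτ
    rw [heq, hs] at e1
    exact e1.symm.trans (theta_rec d1' d2' d3' hτ')
  have hτiff : τ = ∅ ↔ τ' = ∅ := by
    have m1 := theta_mem_L_iff d1 d3 hτ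
    have m2 := theta_mem_L_iff d1' d3' hτ'
    rw [heq, hθ] at m1
    constructor
    · intro h0
      by_contra hne'
      exact m1.1 (m2.2 hne') h0
    · intro h0
      by_contra hne
      exact m2.1 (m1.2 hne) h0
  rcases hτ with h0 | h2
  · have h0' : τ' = ∅ := hτiff.1 h0
    subst h0; subst h0'
    refine ⟨?_, hθ, rfl⟩
    have hse : σ ∪ θ = σ' ∪ θ := by
      have := hs
      rw [Finset.union_empty, Finset.union_empty, ← hθ] at this
      exact this
    ext v
    constructor
    · intro hv
      rcases Finset.mem_union.1 (hse ▸ Finset.mem_union_left θ hv) with h | h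
      · exact h
      · exact absurd h (Finset.disjoint_left.1 d1 hv)
    · intro hv
      rcases Finset.mem_union.1 (hse.symm ▸ Finset.mem_union_left θ hv) with h | h
      · exact h
      · exact absurd h (hθ ▸ Finset.disjoint_left.1 d1' hv)
  · have h2' : 2 ≤ τ'.card := by
      rcases hτ' with h | h
      · exfalso
        have h0 : τ = ∅ := hτiff.2 h
        rw [h0] at h2
        simp at h2
      · exact h
    have hσ : σ = σ' := by
      have e1 := sigma_rec d1 d2 d3 h2
      rw [heq, hs, hθ] at e1
      exact e1.symm.trans (sigma_rec d1' d2' d3' h2')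
    refine ⟨hσ, hθ, ?_⟩
    rw [← sdiff_union_rec d2 d3, ← sdiff_union_rec d2' d3', hs, hθ, hσ]

lemma open_simplex_L {θ : Finset V} {v : V} (hv : v ∈ θ) :
    θ.powerset.filter (fun ρ => ¬ θ ⊆ ρ) =
      (θ.powerset.filter fun ρ => ¬ θ.erase v ⊆ ρ) ∪ (θ.erase v).powerset := by
  ext ρ
  simp only [Finset.mem_union, Finset.mem_filter, Finset.mem_powerset]
  constructor
  · rintro ⟨hρθ, hns⟩
    by_cases h : θ.erase v ⊆ ρ
    · refine Or.inr (Finset.subset_erase.2 ⟨hρθ, fun hvρ => hns fun w hw => ?_⟩)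
      by_cases hwv : w = v
      · exact hwv ▸ hvρ
      · exact h (Finset.mem_erase.2 ⟨hwv, hw⟩)
    · exact Or.inl ⟨hρθ, h⟩
  · rintro (⟨hρθ, hns⟩ | h)
    · exact ⟨hρθ, fun hc => hns ((Finset.erase_subset v θ).trans hc)⟩
    · exact ⟨h.trans (Finset.erase_subset v θ),
        fun hc => Finset.notMem_erase v θ (h (hc hv))⟩

lemma critical_eq_splitTile {T : RelCplx V} {m l : ℕ} (h : IsCriticalTile T m l) :
    (∃ s : Finset V, T = splitTile s ∅ ∅) ∨
      ∃ α β : Finset V, Disjoint α β ∧ (β = ∅ ∨ 2 ≤ β.card) ∧ T = splitTile ∅ α β := by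
  obtain ⟨s, hcard, hK, h⟩ := h
  rcases h with ⟨-, hL⟩ | ⟨hlm, R, hRr, hRc, hL⟩
  · left
    refine ⟨s, RelCplx.ext' ?_ ?_⟩
    · rw [hK, splitTile_K]
      simp
    · rw [hL, splitTile_L_of_empty (Finset.disjoint_empty_right s)]
      simp
  · right
    have hsub : restSet s R ⊆ s := Finset.filter_subset _ _
    have hRimg : R = (restSet s R).image fun v => s.erase v := eq_image_restSet hRr
    have hbel : below s R = s.powerset.filter fun ρ => ¬ restSet s R ⊆ ρ := by
      conv_lhs => rw [hRimg]
      exact below_image_erase hsub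
    have hθc : (restSet s R).card = l := by
      rw [hRimg, card_image_erase hsub] at hRc
      exact hRc
    have hlt : (restSet s R).card < s.card := by omega
    have hsd : 1 ≤ (s \ restSet s R).card := by
      rw [Finset.card_sdiff_of_subset hsub]
      omega
    by_cases h2 : 2 ≤ (s \ restSet s R).card
    · refine ⟨restSet s R, s \ restSet s R, Finset.disjoint_sdiff, Or.inr h2,
        RelCplx.ext' ?_ ?_⟩
      · rw [hK, splitTile_K, Finset.empty_union, Finset.union_sdiff_of_subset hsub]
      · rw [hL, splitTile_L_of_ne (Finset.disjoint_empty_left _) Finset.disjoint_sdiff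
          (ne_empty_of_two_le h2), hbel, below_singleton hsub,
          Finset.empty_union, Finset.union_sdiff_of_subset hsub]
    · have h1 : (s \ restSet s R).card = 1 := by omega
      obtain ⟨v, hv⟩ := Finset.card_eq_one.1 h1
      have hvm : v ∈ s ∧ v ∉ restSet s R := by
        have : v ∈ s \ restSet s R := by rw [hv]; exact Finset.mem_singleton_self v
        exact Finset.mem_sdiff.1 this
      refine ⟨s, ∅, Finset.disjoint_empty_right s, Or.inl rfl, RelCplx.ext' ?_ ?_⟩
      · rw [hK, splitTile_K]
        simp
      · rw [hL, splitTile_L_of_empty (Finset.disjoint_empty_left s), hbel,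
          below_singleton hsub, Finset.empty_union]
        ext ρ
        simp only [Finset.mem_union, Finset.mem_filter, Finset.mem_powerset]
        constructor
        · rintro (⟨hρs, hns⟩ | hρ)
          · exact ⟨hρs, fun hc => hns (hsub.trans hc)⟩
          · refine ⟨hρ.trans hsub, fun hc => hvm.2 (hρ (hc hvm.1))⟩
        · rintro ⟨hρs, hns⟩
          by_cases hθρ : restSet s R ⊆ ρ
          · right
            have hvρ : v ∉ ρ := by
              intro hvρ
              refine hns fun u hu => ?_
              by_cases huθ : u ∈ restSet s R
              · exact hθρ huθ
              · have : u ∈ s \ restSet s R := Finset.mem_sdiff.2 ⟨hu, huθ⟩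
                rw [hv] at this
                rw [Finset.mem_singleton.1 this]
                exact hvρ
            intro w hw
            have hws := hρs hw
            by_cases hwθ : w ∈ restSet s R
            · exact hwθ
            · exfalso
              have : w ∈ s \ restSet s R := Finset.mem_sdiff.2 ⟨hws, hwθ⟩
              rw [hv] at this
              exact hvρ (Finset.mem_singleton.1 this ▸ hw)
          · exact Or.inl ⟨hρs, hθρ⟩
end Aux3

/-- **Proposition.** Every Morse tile splits uniquely as a join `σ * θ̊ * τ̇` of a
closed simplex, an open simplex and a dotted simplex of non-vanishing dimension,
each factor possibly empty. Conversely every such join is a Morse tile of order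
`dim θ + 1` (that is, `θ.card`), critical different from a closed simplex iff
`σ = ∅`, and basic iff `τ = ∅`; moreover `θ̊` is its restriction set and, when
`τ ≠ ∅`, `σ * θ̊` is its Morse face. -/
theorem morse_tile_splitting
    {V : Type*} [DecidableEq V] :
    (∀ T : RelCplx V, (∃ n k, IsMorseTile T n k) →
      ∃! p : Finset V × Finset V × Finset V,
        Disjoint p.1 p.2.1 ∧ Disjoint p.1 p.2.2 ∧ Disjoint p.2.1 p.2.2 ∧
        (p.2.2 = ∅ ∨ 2 ≤ p.2.2.card) ∧ T = splitTile p.1 p.2.1 p.2.2) ∧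
    (∀ σ θ τ : Finset V, Disjoint σ θ → Disjoint σ τ → Disjoint θ τ →
      (τ = ∅ ∨ 2 ≤ τ.card) → (σ ∪ θ ∪ τ).Nonempty →
      IsMorseTile (splitTile σ θ τ) (σ.card + θ.card + τ.card - 1) θ.card ∧
      (((∃ m l, IsCriticalTile (splitTile σ θ τ) m l) ∧
          ¬ IsClosedSimplexTile (splitTile σ θ τ)) ↔ σ = ∅) ∧
      ((∃ m l, IsBasicTile (splitTile σ θ τ) m l) ↔ τ = ∅) ∧
      ∃ R ⊆ ridges (σ ∪ θ ∪ τ), R.card = θ.card ∧ restSet (σ ∪ θ ∪ τ) R = θ ∧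
        (τ = ∅ → (splitTile σ θ τ).L = below (σ ∪ θ ∪ τ) R) ∧
        (τ ≠ ∅ → (splitTile σ θ τ).L =
          below (σ ∪ θ ∪ τ) R ∪ below (σ ∪ θ ∪ τ) {σ ∪ θ})) := by
  constructor
  · rintro T ⟨n, k, s, hcard, hK, R, hRr, hRc, hL⟩
    have hθs : restSet s R ⊆ s := Finset.filter_subset _ _
    have hbel : below s R = s.powerset.filter fun ρ => ¬ restSet s R ⊆ ρ := by
      conv_lhs => rw [eq_image_restSet hRr]
      exact below_image_erase hθs
    rcases hL with hL | ⟨μ, hμs, hμnb, hμc, hL⟩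
    · have hTeq : T = splitTile (s \ restSet s R) (restSet s R) ∅ := by
        refine RelCplx.ext' ?_ ?_
        · rw [hK, splitTile_K, Finset.union_empty, Finset.sdiff_union_of_subset hθs]
        · rw [hL, hbel, splitTile_L_of_empty Finset.sdiff_disjoint,
            Finset.sdiff_union_of_subset hθs]
      refine ⟨(s \ restSet s R, restSet s R, ∅),
        ⟨Finset.sdiff_disjoint, Finset.disjoint_empty_right _,
          Finset.disjoint_empty_right _, Or.inl rfl, hTeq⟩, ?_⟩
      rintro ⟨σ', θ', τ'⟩ ⟨d1', d2', d3', hτ', hT'⟩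
      obtain ⟨e1, e2, e3⟩ := splitTile_inj d1' d2' d3' hτ' Finset.sdiff_disjoint
        (Finset.disjoint_empty_right _) (Finset.disjoint_empty_right _) (Or.inl rfl)
        (hT'.symm.trans hTeq)
      simp only [Prod.mk.injEq]
      exact ⟨e1, e2, e3⟩
    · have hθμ : restSet s R ⊆ μ := by
        by_contra hc
        exact hμnb (by
          rw [hbel]
          exact Finset.mem_filter.2 ⟨Finset.mem_powerset.2 hμs, hc⟩)
      have hμcs : μ.card ≤ s.card := Finset.card_le_card hμs
      have hτc : 2 ≤ (s \ μ).card := by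
        rw [Finset.card_sdiff_of_subset hμs]; omega
      have d1 : Disjoint (μ \ restSet s R) (restSet s R) := Finset.sdiff_disjoint
      have d2 : Disjoint (μ \ restSet s R) (s \ μ) := by
        rw [Finset.disjoint_left]
        intro v hv hv2
        exact (Finset.mem_sdiff.1 hv2).2 ((Finset.mem_sdiff.1 hv).1)
      have d3 : Disjoint (restSet s R) (s \ μ) := by
        rw [Finset.disjoint_left]
        intro v hv hv2
        exact (Finset.mem_sdiff.1 hv2).2 (hθμ hv)
      have hunion : μ \ restSet s R ∪ restSet s R ∪ (s \ μ) = s := by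
        rw [Finset.sdiff_union_of_subset hθμ, Finset.union_sdiff_of_subset hμs]
      have hTeq : T = splitTile (μ \ restSet s R) (restSet s R) (s \ μ) := by
        refine RelCplx.ext' ?_ ?_
        · rw [hK, splitTile_K, hunion]
        · rw [hL, hbel, below_singleton hμs,
            splitTile_L_of_ne d1 d3 (ne_empty_of_two_le hτc), hunion,
            Finset.sdiff_union_of_subset hθμ]
      refine ⟨(μ \ restSet s R, restSet s R, s \ μ), ⟨d1, d2, d3, Or.inr hτc, hTeq⟩, ?_⟩
      rintro ⟨σ', θ', τ'⟩ ⟨d1', d2', d3', hτ', hT'⟩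
      obtain ⟨e1, e2, e3⟩ := splitTile_inj d1' d2' d3' hτ' d1 d2 d3 (Or.inr hτc)
        (hT'.symm.trans hTeq)
      simp only [Prod.mk.injEq]
      exact ⟨e1, e2, e3⟩
  · intro σ θ τ d1 d2 d3 hτ hne
    have hθs : θ ⊆ σ ∪ θ ∪ τ := fun v hv =>
      Finset.mem_union_left _ (Finset.mem_union_right _ hv)
    have hcards : (σ ∪ θ ∪ τ).card = σ.card + θ.card + τ.card := by
      rw [Finset.card_union_of_disjoint (Finset.disjoint_union_left.2 ⟨d2, d3⟩),
        Finset.card_union_of_disjoint d1]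
    have hpos : 1 ≤ (σ ∪ θ ∪ τ).card := Finset.card_pos.2 hne
    have hbel2 : below (σ ∪ θ ∪ τ) (θ.image fun v => (σ ∪ θ ∪ τ).erase v)
        = (σ ∪ θ ∪ τ).powerset.filter fun ρ => ¬ θ ⊆ ρ := below_image_erase hθs
    refine ⟨?_, ?_, ?_, ?_⟩
    · refine ⟨σ ∪ θ ∪ τ, by omega, splitTile_K σ θ τ,
        θ.image fun v => (σ ∪ θ ∪ τ).erase v,
        image_erase_subset_ridges hθs, card_image_erase hθs, ?_⟩
      rcases hτ with rfl | h2
      · left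
        rw [hbel2, splitTile_L_of_empty d1, Finset.union_empty]
      · right
        refine ⟨σ ∪ θ, Finset.subset_union_left, ?_, ?_, ?_⟩
        · rw [hbel2]
          intro hc
          exact (Finset.mem_filter.1 hc).2 Finset.subset_union_right
        · rw [hcards, Finset.card_union_of_disjoint d1]
          omega
        · rw [hbel2, below_singleton Finset.subset_union_left,
            splitTile_L_of_ne d1 d3 (ne_empty_of_two_le h2)]
    · constructor
      · rintro ⟨⟨m, l, hcrit⟩, hncl⟩
        rcases critical_eq_splitTile hcrit with ⟨s'', heq⟩ | ⟨α, β, dαβ, hβ, heq⟩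
        · exfalso
          refine hncl ⟨s'' ∪ ∅ ∪ ∅, ?_, ?_⟩
          · rw [heq, splitTile_K]
          · rw [heq, splitTile_L_of_empty (Finset.disjoint_empty_right _)]
            simp
        · exact (splitTile_inj d1 d2 d3 hτ (Finset.disjoint_empty_left α)
            (Finset.disjoint_empty_left β) dαβ hβ heq).1
      · rintro rfl
        constructor
        · rcases hτ with rfl | h2
          · have hθne : θ.Nonempty := by simpa using hne
            obtain ⟨v, hv⟩ := hθne
            have hvcard : 1 ≤ θ.card := Finset.card_pos.2 ⟨v, hv⟩
            refine ⟨θ.card - 1, θ.card - 1, θ, by omega,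
              by rw [splitTile_K]; simp, Or.inr ⟨le_refl _,
              (θ.erase v).image (fun w => θ.erase w),
              image_erase_subset_ridges (Finset.erase_subset v θ), ?_, ?_⟩⟩
            · rw [card_image_erase (Finset.erase_subset v θ), Finset.card_erase_of_mem hv]
            · rw [restSet_image (Finset.erase_subset v θ),
                below_image_erase (Finset.erase_subset v θ),
                below_singleton (Finset.erase_subset v θ),
                splitTile_L_of_empty (Finset.disjoint_empty_left θ), Finset.empty_union]
              exact open_simplex_L hv
          · refine ⟨(∅ ∪ θ ∪ τ).card - 1, θ.card, ∅ ∪ θ ∪ τ, by omega, splitTile_K _ _ _,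
              Or.inr ⟨by omega, θ.image (fun w => (∅ ∪ θ ∪ τ).erase w),
              image_erase_subset_ridges hθs, card_image_erase hθs, ?_⟩⟩
            rw [restSet_image hθs, hbel2, below_singleton hθs,
              splitTile_L_of_ne d1 d3 (ne_empty_of_two_le h2), Finset.empty_union]
        · rintro ⟨s'', hK'', hL''⟩
          have hmem : (∅ : Finset V) ∈ (splitTile ∅ θ τ).L := by
            rcases hτ with rfl | h2
            · have hθne : θ.Nonempty := by simpa using hne
              rw [splitTile_L_of_empty (Finset.disjoint_empty_left θ)]
              refine Finset.mem_filter.2 ⟨Finset.mem_powerset.2 (Finset.empty_subset _), ?_⟩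
              intro hc
              exact hθne.ne_empty (Finset.subset_empty.1 hc)
            · rw [splitTile_L_of_ne d1 d3 (ne_empty_of_two_le h2)]
              exact Finset.mem_union_right _ (Finset.mem_powerset.2 (Finset.empty_subset _))
          rw [hL''] at hmem
          exact Finset.notMem_empty _ hmem
    · constructor
      · rintro ⟨n', k', s'', hc'', hK'', R'', hRr'', hRc'', hL''⟩
        by_contra hτne
        have h2 : 2 ≤ τ.card := by
          rcases hτ with h | h
          · exact absurd h hτne
          · exact h
        have hse : s'' = σ ∪ θ ∪ τ :=
          powerset_inj (hK''.symm.trans (splitTile_K σ θ τ))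
        subst hse
        have hsub'' : restSet (σ ∪ θ ∪ τ) R'' ⊆ σ ∪ θ ∪ τ := Finset.filter_subset _ _
        have hbel'' : below (σ ∪ θ ∪ τ) R''
            = (σ ∪ θ ∪ τ).powerset.filter fun ρ => ¬ restSet (σ ∪ θ ∪ τ) R'' ⊆ ρ := by
          conv_lhs => rw [eq_image_restSet hRr'']
          exact below_image_erase hsub''
        have e1 : ((σ ∪ θ ∪ τ).filter fun v =>
            (σ ∪ θ ∪ τ).erase v ∈ (splitTile σ θ τ).L) = restSet (σ ∪ θ ∪ τ) R'' := by
          rw [hL'', hbel'']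
          exact filter_rec_empty hsub''
        have hθeq : restSet (σ ∪ θ ∪ τ) R'' = θ := e1.symm.trans (theta_rec d1 d2 d3 hτ)
        have hmem : θ ∈ (splitTile σ θ τ).L := (theta_mem_L_iff d1 d3 hτ).2 hτne
        rw [hL'', hbel'', hθeq] at hmem
        exact (Finset.mem_filter.1 hmem).2 (Finset.Subset.refl θ)
      · rintro rfl
        exact ⟨(σ ∪ θ ∪ ∅).card - 1, θ.card, σ ∪ θ ∪ ∅, by omega, splitTile_K _ _ _,
          θ.image (fun w => (σ ∪ θ ∪ ∅).erase w), image_erase_subset_ridges hθs,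
          card_image_erase hθs,
          by rw [hbel2, splitTile_L_of_empty d1, Finset.union_empty]⟩
    · refine ⟨θ.image (fun w => (σ ∪ θ ∪ τ).erase w), image_erase_subset_ridges hθs,
        card_image_erase hθs, restSet_image hθs, ?_, ?_⟩
      · rintro rfl
        rw [hbel2, splitTile_L_of_empty d1, Finset.union_empty]
      · intro hτne
        rw [hbel2, below_singleton Finset.subset_union_left,
          splitTile_L_of_ne d1 d3 hτne]

end MorseShelling
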